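/- arXiv:1005.4293 — 6 statements merged into one kernel-verified Lean document; each statement's English description precedes it below -/
import Mathlib

section
/- For integers 1 ≤ k ≤ n and real x ∈ [0,1], q ∈ (0,1), the derivative with respect to x of the modified q-Bernstein polynomial satisfies d/dx B_{k,n}(x,q) = n · (q^x · B_{k-1,n-1}(x,q) − q^{1-x} · B_{k,n-1}(x,q)) · (ln q)/(q−1). -/
open Finset Real

noncomputable def qnum (q x : ℝ) : ℝ := (1 - q ^ x) / (1 - q)

noncomputable def qB (k n : ℕ) (x q : ℝ) : ℝ :=
  (n.choose k : ℝ) * qnum q x ^ k * qnum q (1 - x) ^ (n - k)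

/-!
The modified q-Bernstein polynomial is `C(n,k) f^k g^(n-k)` with `f = [·]_q` and
`g = [1 - ·]_q`. The product rule gives `C(n,k) (k f^(k-1) f' g^(n-k) + (n-k) f^k g^(n-k-1) g')`,
and the absorption identities `k C(n,k) = n C(n-1,k-1)`, `(n-k) C(n,k) = n C(n-1,k)` turn this into
`n (f' B_{k-1,n-1} + g' B_{k,n-1})`, where `f' = q^x ln q/(q-1)` and `g' = -q^(1-x) ln q/(q-1)`.
-/

theorem Nat.mul_choose_eq_mul_sub_one_choose_sub_one (n : ℕ) {k : ℕ} (hk : 1 ≤ k) :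
    k * n.choose k = n * (n - 1).choose (k - 1) := by
  obtain ⟨j, rfl⟩ := Nat.exists_eq_add_of_le' hk
  rcases n with _ | m
  · simp
  · simpa [mul_comm] using (Nat.add_one_mul_choose_eq m j).symm

theorem Nat.sub_mul_choose_eq_mul_sub_one_choose (n k : ℕ) :
    (n - k) * n.choose k = n * (n - 1).choose k := by
  rcases n with _ | m
  · simp
  · simpa [mul_comm] using (Nat.choose_mul_succ_eq m k).symm

section

variable {𝕜 : Type*} [NontriviallyNormedField 𝕜] {f g : 𝕜 → 𝕜} {f' g' x : 𝕜}

theorem HasDerivAt.choose_mul_pow_mul_pow (hf : HasDerivAt f f' x) (hg : HasDerivAt g g' x)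
    {k : ℕ} (hk : 1 ≤ k) (n : ℕ) :
    HasDerivAt (fun y => (n.choose k : 𝕜) * f y ^ k * g y ^ (n - k))
      (n * (f' * ((n - 1).choose (k - 1) * f x ^ (k - 1) * g x ^ (n - 1 - (k - 1)))
        + g' * ((n - 1).choose k * f x ^ k * g x ^ (n - 1 - k)))) x := by
  have hfk := congrArg (Nat.cast : ℕ → 𝕜) (n.mul_choose_eq_mul_sub_one_choose_sub_one hk)
  have hgk := congrArg (Nat.cast : ℕ → 𝕜) (n.sub_mul_choose_eq_mul_sub_one_choose k)
  push_cast at hfk hgk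
  rw [show n - 1 - (k - 1) = n - k by omega, Nat.sub_right_comm]
  refine (((hf.fun_pow k).const_mul (n.choose k : 𝕜)).mul (hg.fun_pow (n - k))).congr_deriv ?_
  linear_combination (f' * f x ^ (k - 1) * g x ^ (n - k)) * hfk
    + (g' * f x ^ k * g x ^ (n - k - 1)) * hgk

end

theorem hasDerivAt_qnum {q : ℝ} (hq : 0 < q) (x : ℝ) :
    HasDerivAt (qnum q) (q ^ x * (log q / (q - 1))) x := by
  have hpow : HasDerivAt (fun y => q ^ y) (q ^ x * log q) x :=
    (hasStrictDerivAt_const_rpow hq x).hasDerivAt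
  refine (((hasDerivAt_const x 1).sub hpow).div_const (1 - q)).congr_deriv ?_
  rw [show q - 1 = -(1 - q) by ring, div_neg]
  ring

theorem hasDerivAt_qnum_one_sub {q : ℝ} (hq : 0 < q) (x : ℝ) :
    HasDerivAt (fun y => qnum q (1 - y)) (-(q ^ (1 - x) * (log q / (q - 1)))) x := by
  simpa [Function.comp_def] using
    (hasDerivAt_qnum hq (1 - x)).comp x ((hasDerivAt_id x).const_sub 1)

theorem stmt1_general (k n : ℕ) (hk : 1 ≤ k) (x q : ℝ)
    (hq : q ∈ Set.Ioo (0:ℝ) 1) :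
    HasDerivAt (fun y => qB k n y q)
      ((n : ℝ) * (q ^ x * qB (k - 1) (n - 1) x q - q ^ (1 - x) * qB k (n - 1) x q) *
        (Real.log q / (q - 1))) x := by
  refine ((hasDerivAt_qnum hq.1 x).choose_mul_pow_mul_pow
    (hasDerivAt_qnum_one_sub hq.1 x) hk n).congr_deriv ?_
  simp only [qB]
  ring

theorem stmt1 (k n : ℕ) (hk : 1 ≤ k) (hkn : k ≤ n) (x q : ℝ)
    (hx : x ∈ Set.Icc (0:ℝ) 1) (hq : q ∈ Set.Ioo (0:ℝ) 1) :
    HasDerivAt (fun y => qB k n y q)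
      ((n : ℝ) * (q ^ x * qB (k - 1) (n - 1) x q - q ^ (1 - x) * qB k (n - 1) x q) *
        (Real.log q / (q - 1))) x :=
  stmt1_general k n hk x q hq
end

section
/- For a positive integer n, x ∈ [0,1], and q ∈ (0,1), Σ_{k=0}^n (k/n) · B_{k,n}(x,q) = [x]_q · ([x]_q + [1−x]_q)^{n−1}. -/
open Finset Real

/-! With `a = [x]_q` and `b = [1-x]_q` this is the first-moment identity
`∑ k C(n, k) a^k b^(n-k) = n a (a + b)^(n-1)`, which holds in any commutative semiring because
`k C(n, k) = n C(n-1, k-1)` turns the sum into `n a` times the binomial expansion of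
`(a + b)^(n-1)`. -/

theorem sum_range_mul_choose_mul_pow_mul_pow {R : Type*} [CommSemiring R] (n : ℕ) (a b : R) :
    ∑ k ∈ range (n + 1), (k : R) * n.choose k * a ^ k * b ^ (n - k) =
      n * a * (a + b) ^ (n - 1) := by
  cases n with
  | zero => simp
  | succ m =>
    rw [sum_range_succ', Nat.add_sub_cancel, add_pow, mul_sum]
    simp only [Nat.cast_zero, zero_mul, add_zero]
    refine sum_congr rfl fun j _ => ?_
    have hchoose : ((j + 1 : ℕ) : R) * ((m + 1).choose (j + 1) : ℕ) = (m + 1 : ℕ) * m.choose j := by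
      rw [← Nat.cast_mul, ← Nat.cast_mul, mul_comm, ← Nat.add_one_mul_choose_eq]
    rw [Nat.add_sub_add_right, hchoose]
    push_cast
    ring

theorem stmt5_general (n : ℕ) (hn : 1 ≤ n) (x q : ℝ) :
    ∑ k ∈ Finset.range (n + 1), ((k : ℝ) / (n : ℝ)) * qB k n x q =
      qnum q x * (qnum q x + qnum q (1 - x)) ^ (n - 1) := by
  have hn' : (n : ℝ) ≠ 0 := Nat.cast_ne_zero.mpr (by omega)
  calc ∑ k ∈ range (n + 1), ((k : ℝ) / n) * qB k n x q
      = (n : ℝ)⁻¹ * ∑ k ∈ range (n + 1),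
          (k : ℝ) * n.choose k * qnum q x ^ k * qnum q (1 - x) ^ (n - k) := by
        rw [mul_sum]
        exact sum_congr rfl fun k _ => by rw [qB]; ring
    _ = qnum q x * (qnum q x + qnum q (1 - x)) ^ (n - 1) := by
        rw [sum_range_mul_choose_mul_pow_mul_pow]
        field_simp

theorem stmt5 (n : ℕ) (hn : 1 ≤ n) (x q : ℝ)
    (hx : x ∈ Set.Icc (0:ℝ) 1) (hq : q ∈ Set.Ioo (0:ℝ) 1) :
    ∑ k ∈ Finset.range (n + 1), ((k : ℝ) / (n : ℝ)) * qB k n x q =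
      qnum q x * (qnum q x + qnum q (1 - x)) ^ (n - 1) :=
  stmt5_general n hn x q
end

section
/- For integers n ≥ 2, x ∈ [0,1], and q ∈ (0,1), Σ_{k=2}^n (C(k,2)/C(n,2)) · B_{k,n}(x,q) = [x]_q^2 · ([x]_q + [1−x]_q)^{n−2}. -/
open Finset Real

/-- `k.choose m * n.choose k = n.choose m * (n - m).choose (k - m)` turns the sum into `a ^ m`
times the binomial expansion of `(a + b) ^ (n - m)`. -/
theorem sum_choose_mul_choose_mul_pow {R : Type*} [CommSemiring R] (a b : R) {m n : ℕ}
    (hmn : m ≤ n) :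
    ∑ k ∈ Icc m n, (k.choose m * n.choose k : R) * a ^ k * b ^ (n - k) =
      n.choose m * a ^ m * (a + b) ^ (n - m) := by
  rw [← Ico_add_one_right_eq_Icc, sum_Ico_eq_sum_range, add_pow, mul_sum,
    Nat.sub_add_comm hmn]
  refine sum_congr rfl fun j _ => ?_
  have hcoef : ((m + j).choose m * n.choose (m + j) : R) = n.choose m * (n - m).choose j := by
    have := Nat.choose_mul (n := n) (Nat.le_add_right m j)
    rw [Nat.add_sub_cancel_left] at this
    exact_mod_cast congrArg (Nat.cast : ℕ → R) ((mul_comm _ _).trans this)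
  rw [hcoef, pow_add, Nat.sub_add_eq]
  ring

theorem stmt6_general (n : ℕ) (hn : 2 ≤ n) (x q : ℝ) :
    ∑ k ∈ Finset.Icc 2 n, ((k.choose 2 : ℝ) / (n.choose 2 : ℝ)) * qB k n x q =
      qnum q x ^ 2 * (qnum q x + qnum q (1 - x)) ^ (n - 2) := by
  have hC : (n.choose 2 : ℝ) ≠ 0 := by exact_mod_cast (Nat.choose_pos hn).ne'
  have hterm : ∀ k ∈ Icc 2 n, ((k.choose 2 : ℝ) / n.choose 2) * qB k n x q =
      (n.choose 2 : ℝ)⁻¹ *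
        ((k.choose 2 * n.choose k : ℝ) * qnum q x ^ k * qnum q (1 - x) ^ (n - k)) := by
    intro k _
    rw [qB]
    ring
  rw [sum_congr rfl hterm, ← mul_sum, sum_choose_mul_choose_mul_pow _ _ hn]
  field_simp

theorem stmt6 (n : ℕ) (hn : 2 ≤ n) (x q : ℝ)
    (hx : x ∈ Set.Icc (0:ℝ) 1) (hq : q ∈ Set.Ioo (0:ℝ) 1) :
    ∑ k ∈ Finset.Icc 2 n, ((k.choose 2 : ℝ) / (n.choose 2 : ℝ)) * qB k n x q =
      qnum q x ^ 2 * (qnum q x + qnum q (1 - x)) ^ (n - 2) :=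
  stmt6_general n hn x q
end

section
/- For integers 1 ≤ i ≤ n, x ∈ [0,1), and q ∈ (0,1), [x]_q^i = (1/([x]_q + [1−x]_q)^{n−i}) · Σ_{k=i}^n (C(k,i)/C(n,i)) · B_{k,n}(x,q). Note that [x]_q + [1−x]_q > 0 for x ∈ [0,1] and q ∈ (0,1). -/
open Finset Real

/-- Trinomial revision `C(n,k) C(k,i) = C(n,i) C(n-i,k-i)` turns the sum into
`C(n,i) aⁱ` times the binomial expansion of `(a + b)ⁿ⁻ⁱ`. -/
theorem sum_Icc_choose_mul_choose_mul_pow {R : Type*} [CommSemiring R] (a b : R) {i n : ℕ}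
    (hin : i ≤ n) :
    ∑ k ∈ Icc i n, (n.choose k : R) * k.choose i * a ^ k * b ^ (n - k) =
      n.choose i * a ^ i * (a + b) ^ (n - i) := by
  rw [← Ico_add_one_right_eq_Icc, sum_Ico_eq_sum_range, Nat.sub_add_comm hin, add_pow, mul_sum]
  refine sum_congr rfl fun j _ => ?_
  have hrev : (n.choose (i + j) : R) * (i + j).choose i = n.choose i * (n - i).choose j := by
    rw [← Nat.cast_mul, ← Nat.cast_mul, Nat.choose_mul (Nat.le_add_right i j),
      Nat.add_sub_cancel_left]
  rw [hrev, show n - (i + j) = n - i - j by omega, pow_add]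
  ring

theorem qnum_nonneg {q x : ℝ} (hq : q ∈ Set.Ioo (0:ℝ) 1) (hx : 0 ≤ x) : 0 ≤ qnum q x :=
  div_nonneg (sub_nonneg.mpr (rpow_le_one hq.1.le hq.2.le hx)) (sub_nonneg.mpr hq.2.le)

theorem qnum_pos {q x : ℝ} (hq : q ∈ Set.Ioo (0:ℝ) 1) (hx : 0 < x) : 0 < qnum q x :=
  div_pos (sub_pos.mpr (rpow_lt_one hq.1.le hq.2 hx)) (sub_pos.mpr hq.2)

theorem qnum_add_qnum_one_sub_pos {q x : ℝ} (hq : q ∈ Set.Ioo (0:ℝ) 1)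
    (hx : x ∈ Set.Icc (0:ℝ) 1) : 0 < qnum q x + qnum q (1 - x) := by
  rcases hx.1.eq_or_lt with rfl | hx0
  · have hq0 : qnum q 0 = 0 := by simp [qnum]
    simpa [hq0] using qnum_pos hq one_pos
  · exact add_pos_of_pos_of_nonneg (qnum_pos hq hx0) (qnum_nonneg hq (sub_nonneg.mpr hx.2))

theorem stmt8_general (i n : ℕ) (hin : i ≤ n) (x q : ℝ)
    (hx : x ∈ Set.Ico (0:ℝ) 1) (hq : q ∈ Set.Ioo (0:ℝ) 1) :
    qnum q x ^ i =
      (1 / (qnum q x + qnum q (1 - x)) ^ (n - i)) *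
        ∑ k ∈ Finset.Icc i n, ((k.choose i : ℝ) / (n.choose i : ℝ)) * qB k n x q := by
  have hsum_pos : 0 < qnum q x + qnum q (1 - x) :=
    qnum_add_qnum_one_sub_pos hq (Set.Ico_subset_Icc_self hx)
  have hchoose : (n.choose i : ℝ) ≠ 0 := by exact_mod_cast (Nat.choose_pos hin).ne'
  have hsum : ∑ k ∈ Icc i n, ((k.choose i : ℝ) / n.choose i) * qB k n x q =
      qnum q x ^ i * (qnum q x + qnum q (1 - x)) ^ (n - i) := by
    rw [← mul_right_inj' hchoose, mul_sum,
      ← mul_assoc, ← sum_Icc_choose_mul_choose_mul_pow _ _ hin]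
    refine sum_congr rfl fun k _ => ?_
    rw [qB]
    field_simp
  rw [hsum, one_div, mul_comm (qnum q x ^ i), inv_mul_cancel_left₀ (pow_pos hsum_pos _).ne']

theorem stmt8 (i n : ℕ) (hi : 1 ≤ i) (hin : i ≤ n) (x q : ℝ)
    (hx : x ∈ Set.Ico (0:ℝ) 1) (hq : q ∈ Set.Ioo (0:ℝ) 1) :
    qnum q x ^ i =
      (1 / (qnum q x + qnum q (1 - x)) ^ (n - i)) *
        ∑ k ∈ Finset.Icc i n, ((k.choose i : ℝ) / (n.choose i : ℝ)) * qB k n x q :=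
  stmt8_general i n hin x q hx hq
end

section
/- For integers 0 ≤ k ≤ n−1 with n ≥ 1, x ∈ [0,1], and q ∈ (0,1), the linear combination ((n−k)/n) · B_{k,n}(x,q) + ((k+1)/n) · B_{k+1,n}(x,q) equals B_{k,n−1}(x,q) · (1 + (1−q)·[x]_q·[1−x]_q). -/
/-! With `a = [x]_q` and `b = [1-x]_q`, the binomial identities
`(n+1-k) C(n+1,k) = (n+1) C(n,k) = (k+1) C(n+1,k+1)` turn the left-hand side into
`C(n,k) a^k b^(n-k) (a + b)` (degree elevation of Bernstein polynomials), and
`a + b = 1 + (1-q) a b` because `q^x q^(1-x) = q`. -/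

open Finset Real

theorem qnum_add_qnum_one_sub {q : ℝ} (hq₀ : 0 < q) (hq₁ : q ≠ 1) (x : ℝ) :
    qnum q x + qnum q (1 - x) = 1 + (1 - q) * qnum q x * qnum q (1 - x) := by
  have hq : 1 - q ≠ 0 := sub_ne_zero.mpr hq₁.symm
  have hpow : q ^ x * q ^ (1 - x) = q := by
    rw [← rpow_add hq₀, add_sub_cancel, rpow_one]
  unfold qnum
  field_simp
  linear_combination -hpow

theorem choose_pow_degree_elevation {R : Type*} [CommRing R] {k n : ℕ} (hk : k ≤ n) (a b : R) :
    ((n + 1 - k : ℕ) : R) * ((n + 1).choose k * a ^ k * b ^ (n + 1 - k)) +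
        ((k + 1 : ℕ) : R) * ((n + 1).choose (k + 1) * a ^ (k + 1) * b ^ (n + 1 - (k + 1))) =
      (n + 1) * (n.choose k * a ^ k * b ^ (n - k)) * (a + b) := by
  have hnk : n + 1 - k = n - k + 1 := by omega
  have h₁ : ((n + 1).choose k : R) * (n - k + 1 : ℕ) = n.choose k * (n + 1) := by
    rw [← hnk]; exact_mod_cast congrArg (Nat.cast : ℕ → R) (Nat.choose_mul_succ_eq n k).symm
  have h₂ : ((n + 1).choose (k + 1) : R) * (k + 1 : ℕ) = (n + 1) * n.choose k := by
    exact_mod_cast congrArg (Nat.cast : ℕ → R) (Nat.add_one_mul_choose_eq n k).symm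
  rw [Nat.add_sub_add_right, hnk, pow_succ, pow_succ]
  linear_combination (a ^ k * b ^ (n - k)) * (b * h₁ + a * h₂)

theorem stmt9_general (k n : ℕ) (hn : 1 ≤ n) (hk : k ≤ n - 1) (x q : ℝ)
    (hq : q ∈ Set.Ioo (0:ℝ) 1) :
    (((n - k : ℕ) : ℝ) / (n : ℝ)) * qB k n x q + (((k + 1 : ℕ) : ℝ) / (n : ℝ)) * qB (k + 1) n x q =
      qB k (n - 1) x q * (1 + (1 - q) * qnum q x * qnum q (1 - x)) := by
  obtain ⟨m, rfl⟩ : ∃ m, n = m + 1 := ⟨n - 1, by omega⟩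
  rw [Nat.add_sub_cancel] at hk ⊢
  rw [← qnum_add_qnum_one_sub hq.1 hq.2.ne, div_mul_eq_mul_div, div_mul_eq_mul_div, ← add_div,
    div_eq_iff (by positivity), qB, qB, qB, choose_pow_degree_elevation hk]
  push_cast
  ring

theorem stmt9 (k n : ℕ) (hn : 1 ≤ n) (hk : k ≤ n - 1) (x q : ℝ)
    (hx : x ∈ Set.Icc (0:ℝ) 1) (hq : q ∈ Set.Ioo (0:ℝ) 1) :
    (((n - k : ℕ) : ℝ) / (n : ℝ)) * qB k n x q + (((k + 1 : ℕ) : ℝ) / (n : ℝ)) * qB (k + 1) n x q =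
      qB k (n - 1) x q * (1 + (1 - q) * qnum q x * qnum q (1 - x)) :=
  stmt9_general k n hn hk x q hq
end

section
/- For a nonnegative integer n, real x, and q ∈ (0,1), the q-power expansion [x]_q^n = Σ_{k=0}^n q^{C(k,2)} · qbinom(x,k) · [k]_q! · S(n,k:q) holds, where qbinom(x,k) = [x]_q[x−1]_q⋯[x−k+1]_q/[k]_q!. -/
/-!
Splitting `[x]_q = [k]_q + q^k [x - k]_q` turns multiplication by `[x]_q` into a two-term
recurrence in the basis `qbinX x k`:
`qbinX x k * [x]_q = [k]_q qbinX x k + q^k [k+1]_q qbinX x (k+1)`.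
The numbers `T(n, k) = q^C(k,2) [k]_q! S(n, k : q)` satisfy the matching recurrence
`T(n+1, k+1) = [k+1]_q (T(n, k+1) + q^k T(n, k))`, by `[k+1-j]_q = [k+1]_q - q^(k+1-j) [j]_q` and
`q`-binomial absorption, and they vanish for `k > n` because the alternating sum
`∑ j, (-1)^j q^C(j,2) qbinom(k, j)` vanishes for `k ≥ 1`. Induction on `n` gives the expansion.
-/

open Finset Real

noncomputable def qfact (q : ℝ) : ℕ → ℝ
  | 0 => 1
  | n + 1 => qnum q ((n : ℝ) + 1) * qfact q n

noncomputable def qbin (q : ℝ) (k j : ℕ) : ℝ := qfact q k / (qfact q j * qfact q (k - j))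

noncomputable def qStir (q : ℝ) (n k : ℕ) : ℝ :=
  (∑ j ∈ Finset.range (k + 1),
      (-1 : ℝ) ^ j * q ^ j.choose 2 * qbin q k j * qnum q ((k - j : ℕ) : ℝ) ^ n) /
    (q ^ k.choose 2 * qfact q k)

noncomputable def qbinX (q x : ℝ) (k : ℕ) : ℝ :=
  (∏ i ∈ Finset.range k, qnum q (x - (i : ℝ))) / qfact q k

section

variable {q : ℝ}

lemma qnum_zero : qnum q 0 = 0 := by
  simp [qnum]

lemma qnum_add (hq0 : 0 < q) (hq1 : q ≠ 1) (x y : ℝ) :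
    qnum q (x + y) = qnum q x + q ^ x * qnum q y := by
  have : 1 - q ≠ 0 := sub_ne_zero.mpr hq1.symm
  simp only [qnum, rpow_add hq0]
  field_simp
  ring

lemma qnum_natCast (hq1 : q ≠ 1) (k : ℕ) : qnum q k = ∑ i ∈ range k, q ^ i := by
  rw [geom_sum_eq hq1, qnum, rpow_natCast, ← neg_div_neg_eq, neg_sub, neg_sub]

lemma qnum_natCast_add (hq1 : q ≠ 1) (a b : ℕ) :
    qnum q ((a + b : ℕ) : ℝ) = qnum q a + q ^ a * qnum q b := by
  simp only [qnum_natCast hq1, sum_range_add, pow_add, mul_sum]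

lemma qnum_natCast_pos (hq0 : 0 < q) (hq1 : q ≠ 1) {k : ℕ} (hk : k ≠ 0) : 0 < qnum q k := by
  rw [qnum_natCast hq1]
  exact sum_pos (fun i _ ↦ pow_pos hq0 i) (nonempty_range_iff.mpr hk)

lemma qfact_succ (k : ℕ) : qfact q (k + 1) = qnum q ((k + 1 : ℕ) : ℝ) * qfact q k := by
  rw [Nat.cast_succ]; rfl

lemma qfact_pos (hq0 : 0 < q) (hq1 : q ≠ 1) (k : ℕ) : 0 < qfact q k := by
  induction k with
  | zero => exact one_pos
  | succ k ih => rw [qfact_succ]; exact mul_pos (qnum_natCast_pos hq0 hq1 k.succ_ne_zero) ih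

lemma qbin_zero_right (hq0 : 0 < q) (hq1 : q ≠ 1) (k : ℕ) : qbin q k 0 = 1 := by
  simp [qbin, qfact, (qfact_pos hq0 hq1 k).ne']

lemma qbin_self (hq0 : 0 < q) (hq1 : q ≠ 1) (k : ℕ) : qbin q k k = 1 := by
  simp [qbin, qfact, (qfact_pos hq0 hq1 k).ne']

lemma qbin_succ_succ (hq0 : 0 < q) (hq1 : q ≠ 1) {i m : ℕ} (h : i < m) :
    qbin q (m + 1) (i + 1) = q ^ (i + 1) * qbin q m (i + 1) + qbin q m i := by
  obtain ⟨r, rfl⟩ := Nat.exists_eq_add_of_lt h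
  have hsplit := qnum_natCast_add hq1 (i + 1) (r + 1)
  rw [show i + 1 + (r + 1) = i + r + 1 + 1 by ring] at hsplit
  have h₁ : i + r + 1 + 1 - (i + 1) = r + 1 := by omega
  have h₂ : i + r + 1 - (i + 1) = r := by omega
  have h₃ : i + r + 1 - i = r + 1 := by omega
  have := (qfact_pos hq0 hq1 i).ne'
  have := (qfact_pos hq0 hq1 r).ne'
  have := (qnum_natCast_pos hq0 hq1 i.succ_ne_zero).ne'
  have := (qnum_natCast_pos hq0 hq1 r.succ_ne_zero).ne'
  simp only [qbin, h₁, h₂, h₃, qfact_succ, hsplit]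
  field_simp
  ring

lemma qnum_mul_qbin_succ_succ (hq0 : 0 < q) (hq1 : q ≠ 1) (i m : ℕ) :
    qnum q ((i + 1 : ℕ) : ℝ) * qbin q (m + 1) (i + 1) = qnum q ((m + 1 : ℕ) : ℝ) * qbin q m i := by
  have := (qfact_pos hq0 hq1 i).ne'
  have := (qfact_pos hq0 hq1 (m - i)).ne'
  have := (qnum_natCast_pos hq0 hq1 i.succ_ne_zero).ne'
  rw [qbin, qbin, Nat.add_sub_add_right, qfact_succ, qfact_succ]
  field_simp

lemma choose_two_succ (j : ℕ) : (j + 1).choose 2 = j.choose 2 + j := by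
  rw [Nat.choose_succ_succ', Nat.choose_one_right, add_comm]

/-- The `k`-th `q`-difference of `t ↦ [t]_q ^ n` at `0`, equal to
`q ^ C(k, 2) * [k]_q! * S(n, k : q)` (see `qStir_eq`). -/
noncomputable def qStirNumerator (q : ℝ) (n k : ℕ) : ℝ :=
  ∑ j ∈ range (k + 1), (-1 : ℝ) ^ j * q ^ j.choose 2 * qbin q k j * qnum q ((k - j : ℕ) : ℝ) ^ n

lemma qStir_eq (n k : ℕ) :
    qStir q n k = qStirNumerator q n k / (q ^ k.choose 2 * qfact q k) := rfl

lemma sum_neg_one_pow_mul_qbin (hq0 : 0 < q) (hq1 : q ≠ 1) (m : ℕ) :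
    ∑ j ∈ range (m + 2), (-1 : ℝ) ^ j * q ^ j.choose 2 * qbin q (m + 1) j = 0 := by
  -- Pascal's rule makes the inner terms telescope.
  set D : ℕ → ℝ := fun j ↦ (-1 : ℝ) ^ j * q ^ (j.choose 2 + j) * qbin q m j
  have htele : ∀ j ∈ range m,
      (-1 : ℝ) ^ (j + 1) * q ^ (j + 1).choose 2 * qbin q (m + 1) (j + 1) = D (j + 1) - D j := by
    intro j hj
    rw [qbin_succ_succ hq0 hq1 (mem_range.mp hj)]
    simp only [D, choose_two_succ, pow_add]
    ring
  rw [sum_range_succ, sum_range_succ', sum_congr rfl htele, sum_range_sub]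
  simp only [D, qbin_zero_right hq0 hq1, qbin_self hq0 hq1, choose_two_succ, Nat.choose_zero_succ,
    pow_zero]
  ring

lemma qStirNumerator_zero_zero : qStirNumerator q 0 0 = 1 := by
  simp [qStirNumerator, qbin, qfact]

lemma qStirNumerator_succ_zero (n : ℕ) : qStirNumerator q (n + 1) 0 = 0 := by
  simp [qStirNumerator, qnum_zero]

lemma qStirNumerator_zero_succ (hq0 : 0 < q) (hq1 : q ≠ 1) (m : ℕ) :
    qStirNumerator q 0 (m + 1) = 0 := by
  simpa [qStirNumerator] using sum_neg_one_pow_mul_qbin hq0 hq1 m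

lemma qStirNumerator_succ_succ (hq0 : 0 < q) (hq1 : q ≠ 1) (n m : ℕ) :
    qStirNumerator q (n + 1) (m + 1) =
      qnum q ((m + 1 : ℕ) : ℝ) * (qStirNumerator q n (m + 1) + q ^ m * qStirNumerator q n m) := by
  set E : ℕ → ℝ := fun j ↦ (-1 : ℝ) ^ j * q ^ j.choose 2 *
    (q ^ (m + 1 - j) * qnum q (j : ℝ) * qbin q (m + 1) j) * qnum q ((m + 1 - j : ℕ) : ℝ) ^ n
  have hsplit : qStirNumerator q (n + 1) (m + 1) =
      qnum q ((m + 1 : ℕ) : ℝ) * qStirNumerator q n (m + 1) - ∑ j ∈ range (m + 2), E j := by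
    rw [qStirNumerator, qStirNumerator, mul_sum, ← sum_sub_distrib]
    refine sum_congr rfl fun j hj ↦ ?_
    have hj : j ≤ m + 1 := Nat.lt_succ_iff.mp (mem_range.mp hj)
    have h := qnum_natCast_add hq1 (m + 1 - j) j
    rw [Nat.sub_add_cancel hj] at h
    simp only [E, h, pow_succ]
    ring
  have hshift :
      ∑ j ∈ range (m + 2), E j = -(q ^ m * qnum q ((m + 1 : ℕ) : ℝ) * qStirNumerator q n m) := by
    rw [sum_range_succ', qStirNumerator, mul_sum, ← sum_neg_distrib]
    simp only [E, Nat.cast_zero, qnum_zero, mul_zero, zero_mul, add_zero]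
    refine sum_congr rfl fun i hi ↦ ?_
    have hpow : q ^ i * q ^ (m - i) = q ^ m := by
      rw [← pow_add, Nat.add_sub_cancel' (Nat.lt_succ_iff.mp (mem_range.mp hi))]
    rw [Nat.add_sub_add_right, mul_assoc (q ^ _), qnum_mul_qbin_succ_succ hq0 hq1, choose_two_succ,
      pow_add, ← hpow]
    ring
  rw [hsplit, hshift]
  ring

lemma qStirNumerator_eq_zero_of_lt (hq0 : 0 < q) (hq1 : q ≠ 1) {n k : ℕ} (h : n < k) :
    qStirNumerator q n k = 0 := by
  induction n generalizing k with
  | zero =>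
    obtain ⟨m, rfl⟩ := Nat.exists_eq_add_one.mpr (Nat.zero_lt_of_lt h)
    exact qStirNumerator_zero_succ hq0 hq1 m
  | succ n ih =>
    obtain ⟨m, rfl⟩ := Nat.exists_eq_add_one.mpr (Nat.zero_lt_of_lt h)
    rw [qStirNumerator_succ_succ hq0 hq1, ih (by omega), ih (by omega)]
    ring

lemma qbinX_zero (x : ℝ) : qbinX q x 0 = 1 := by
  simp [qbinX, qfact]

lemma qbinX_mul_qnum (hq0 : 0 < q) (hq1 : q ≠ 1) (x : ℝ) (k : ℕ) :
    qbinX q x k * qnum q x =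
      qnum q k * qbinX q x k + q ^ k * qnum q ((k + 1 : ℕ) : ℝ) * qbinX q x (k + 1) := by
  have hsplit := qnum_add hq0 hq1 k (x - k)
  rw [add_sub_cancel, rpow_natCast] at hsplit
  have := (qfact_pos hq0 hq1 k).ne'
  have := (qnum_natCast_pos hq0 hq1 k.succ_ne_zero).ne'
  rw [hsplit, qbinX, qbinX, prod_range_succ, qfact_succ]
  field_simp

lemma qnum_pow_eq_sum_qbinX_mul_qStirNumerator (hq0 : 0 < q) (hq1 : q ≠ 1) (x : ℝ) (n : ℕ) :
    qnum q x ^ n = ∑ k ∈ range (n + 1), qbinX q x k * qStirNumerator q n k := by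
  induction n with
  | zero => simp [qbinX_zero, qStirNumerator_zero_zero]
  | succ n ih =>
    set B := qbinX q x
    set T := qStirNumerator q
    have hT : T n (n + 1) = 0 := qStirNumerator_eq_zero_of_lt hq0 hq1 n.lt_succ_self
    calc qnum q x ^ (n + 1) = ∑ k ∈ range (n + 2), B k * qnum q x * T n k := by
          rw [pow_succ, ih, sum_mul, sum_range_succ _ (n + 1), hT]
          simp only [mul_zero, add_zero]
          exact sum_congr rfl fun k _ ↦ by ring
      _ = ∑ k ∈ range (n + 2), (qnum q k * B k * T n k +
            q ^ k * qnum q ((k + 1 : ℕ) : ℝ) * B (k + 1) * T n k) := by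
          refine sum_congr rfl fun k _ ↦ ?_
          rw [qbinX_mul_qnum hq0 hq1]
          ring
      _ = ∑ m ∈ range (n + 1), (qnum q ((m + 1 : ℕ) : ℝ) * B (m + 1) * T n (m + 1) +
            q ^ m * qnum q ((m + 1 : ℕ) : ℝ) * B (m + 1) * T n m) := by
          rw [sum_add_distrib, sum_add_distrib, sum_range_succ' _ (n + 1),
            sum_range_succ (fun k ↦ q ^ k * _ * B (k + 1) * T n k) (n + 1), hT]
          simp [qnum_zero]
      _ = ∑ k ∈ range (n + 2), B k * T (n + 1) k := by
          rw [sum_range_succ' _ (n + 1)]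
          simp only [T, qStirNumerator_succ_zero, qStirNumerator_succ_succ hq0 hq1, mul_zero,
            add_zero]
          exact sum_congr rfl fun m _ ↦ by ring

end

theorem stmt18 (n : ℕ) (x q : ℝ) (hq : q ∈ Set.Ioo (0:ℝ) 1) :
    qnum q x ^ n =
      ∑ k ∈ Finset.range (n + 1), q ^ k.choose 2 * qbinX q x k * qfact q k * qStir q n k := by
  obtain ⟨hq0, hq1⟩ := hq
  rw [qnum_pow_eq_sum_qbinX_mul_qStirNumerator hq0 hq1.ne x n]
  refine sum_congr rfl fun k _ ↦ ?_
  have := pow_ne_zero (k.choose 2) hq0.ne'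
  have := (qfact_pos hq0 hq1.ne k).ne'
  rw [qStir_eq]
  field_simp
end
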